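/- arXiv:math/0701280 — 2 statements merged into one kernel-verified Lean document; each statement's English description precedes it below -/
import Mathlib

section
/- The function g(τ) = (1 − cos(τ))/(τ − sin(τ)) extends continuously to a strictly decreasing bijection from (0, 2π) onto (0, ∞), tending to +∞ as τ → 0⁺ and to 0 as τ → 2π⁻. In particular, for every c > 0 there is a unique τ ∈ (0, 2π) with (1 − cos(τ))/(τ − sin(τ)) = c. -/
/-!
Writing `u = τ / 2`, the numerator of `g'` is `τ sin τ + 2 cos τ - 2 = 4 sin u (u cos u - sin u)`,
which is negative on `(0, 2π)` because `u cos u < sin u` on `(0, π)`; so `g` is strictly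
decreasing there. Near `0`, `1 - cos τ ≥ 2τ²/π²` and `τ - sin τ < τ³/6` give `g τ ≥ 12/(π² τ)`,
while `g` is continuous at `2π` with `g (2π) = 0`. Continuity, the two limits and injectivity
then make every `c > 0` a value of `g` on `(0, 2π)`, taken exactly once.
-/

open Real Filter Set Topology

theorem existsUnique_mem_Ioo_eq_of_tendsto {α δ : Type*} [ConditionallyCompleteLinearOrder α]
    [TopologicalSpace α] [OrderTopology α] [DenselyOrdered α] [LinearOrder δ]
    [TopologicalSpace δ] [OrderTopology δ] {f : α → δ} {a b : α} {l c : δ} (hab : a < b)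
    (hf : ContinuousOn f (Ioo a b)) (hinj : InjOn f (Ioo a b))
    (ha : Tendsto f (𝓝[>] a) atTop) (hb : Tendsto f (𝓝[<] b) (𝓝 l)) (hc : l < c) :
    ∃! x, x ∈ Ioo a b ∧ f x = c := by
  have := nhdsGT_neBot_of_exists_gt ⟨b, hab⟩
  have := nhdsLT_neBot_of_exists_lt ⟨a, hab⟩
  obtain ⟨x₁, hfx₁, hx₁⟩ := ((ha.eventually_ge_atTop c).and (Ioo_mem_nhdsGT hab)).exists
  obtain ⟨x₂, hfx₂, hx₂⟩ :=
    ((hb.eventually (eventually_lt_nhds hc)).and (Ioo_mem_nhdsLT hab)).exists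
  obtain ⟨x, hx, hfx⟩ := isPreconnected_Ioo.intermediate_value hx₂ hx₁ hf ⟨hfx₂.le, hfx₁⟩
  exact ⟨x, ⟨hx, hfx⟩, fun y hy => hinj hy.1 hx (hy.2.trans hfx.symm)⟩

noncomputable def geodesicRatio (τ : ℝ) : ℝ := (1 - cos τ) / (τ - sin τ)

lemma mul_cos_lt_sin {u : ℝ} (h0 : 0 < u) (hπ : u < π) : u * cos u < sin u := by
  rcases lt_or_ge u (π / 2) with hu | hu
  · have hcos := cos_pos_of_mem_Ioo ⟨by linarith, hu⟩
    have := lt_tan h0 hu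
    rwa [tan_eq_sin_div_cos, lt_div_iff₀ hcos] at this
  · have hcos := cos_nonpos_of_pi_div_two_le_of_le hu (by linarith)
    nlinarith [sin_pos_of_pos_of_lt_pi h0 hπ]

lemma mul_sin_add_two_mul_cos_lt_two {τ : ℝ} (h0 : 0 < τ) (h2π : τ < 2 * π) :
    τ * sin τ + 2 * cos τ < 2 := by
  set u := τ / 2
  have hτ : τ = 2 * u := by ring
  have hsin := sin_pos_of_pos_of_lt_pi (x := u) (by positivity) (by linarith)
  have key : τ * sin τ + 2 * cos τ - 2 = 4 * sin u * (u * cos u - sin u) := by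
    rw [hτ, sin_two_mul, cos_two_mul, cos_sq']
    ring
  nlinarith [mul_cos_lt_sin (u := u) (by positivity) (by linarith)]

lemma sub_sin_pos {τ : ℝ} (h : 0 < τ) : 0 < τ - sin τ :=
  sub_pos.2 (sin_lt h)

lemma hasDerivAt_geodesicRatio {τ : ℝ} (h : 0 < τ) :
    HasDerivAt geodesicRatio ((τ * sin τ + 2 * cos τ - 2) / (τ - sin τ) ^ 2) τ := by
  refine (((hasDerivAt_cos τ).const_sub 1).div ((hasDerivAt_id τ).sub (hasDerivAt_sin τ))
    (sub_sin_pos h).ne').congr_deriv ?_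
  simp only [Pi.sub_apply, id_eq]
  congr 1
  linear_combination -sin_sq_add_cos_sq τ

lemma continuousOn_geodesicRatio : ContinuousOn geodesicRatio (Ioi 0) :=
  (continuous_const.sub continuous_cos).continuousOn.div
    (continuous_id.sub continuous_sin).continuousOn fun _ h => (sub_sin_pos h).ne'

lemma strictAntiOn_geodesicRatio : StrictAntiOn geodesicRatio (Ioo 0 (2 * π)) := by
  refine strictAntiOn_of_deriv_neg (convex_Ioo _ _)
    (continuousOn_geodesicRatio.mono Ioo_subset_Ioi_self) fun τ hτ => ?_
  rw [interior_Ioo] at hτ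
  rw [(hasDerivAt_geodesicRatio hτ.1).deriv]
  exact div_neg_of_neg_of_pos (by linarith [mul_sin_add_two_mul_cos_lt_two hτ.1 hτ.2])
    (pow_pos (sub_sin_pos hτ.1) 2)

lemma mul_inv_le_geodesicRatio {τ : ℝ} (h0 : 0 < τ) (hπ : τ ≤ π) :
    12 / π ^ 2 * τ⁻¹ ≤ geodesicRatio τ := by
  have hnum : 2 / π ^ 2 * τ ^ 2 ≤ 1 - cos τ := by
    linarith [cos_le_one_sub_mul_cos_sq (x := τ) (by rw [abs_of_pos h0]; exact hπ)]
  have hden : τ - sin τ ≤ τ ^ 3 / 6 := by linarith [sin_gt_sub_cube h0]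
  calc 12 / π ^ 2 * τ⁻¹ = 2 / π ^ 2 * τ ^ 2 / (τ ^ 3 / 6) := by field_simp; ring
    _ ≤ geodesicRatio τ := div_le_div₀ (by linarith [cos_le_one τ]) hnum (sub_sin_pos h0) hden

lemma tendsto_geodesicRatio_nhdsGT_zero : Tendsto geodesicRatio (𝓝[>] 0) atTop := by
  have hC : 0 < 12 / π ^ 2 := by positivity
  refine tendsto_atTop_mono' _ ?_ (tendsto_inv_nhdsGT_zero.const_mul_atTop hC)
  filter_upwards [Ioc_mem_nhdsGT pi_pos] with τ hτ
  exact mul_inv_le_geodesicRatio hτ.1 hτ.2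

lemma tendsto_geodesicRatio_nhdsLT_two_pi :
    Tendsto geodesicRatio (𝓝[<] (2 * π)) (𝓝 0) := by
  have h2π : 0 < 2 * π := by positivity
  have := (continuousOn_geodesicRatio.continuousAt (Ioi_mem_nhds h2π)).tendsto
  rw [geodesicRatio, cos_two_pi, sub_self, zero_div] at this
  exact this.mono_left nhdsWithin_le_nhds

theorem stmt3 :
    StrictAntiOn (fun τ : ℝ => (1 - Real.cos τ) / (τ - Real.sin τ)) (Set.Ioo 0 (2 * Real.pi)) ∧
    Tendsto (fun τ : ℝ => (1 - Real.cos τ) / (τ - Real.sin τ))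
      (nhdsWithin 0 (Set.Ioi 0)) atTop ∧
    Tendsto (fun τ : ℝ => (1 - Real.cos τ) / (τ - Real.sin τ))
      (nhdsWithin (2 * Real.pi) (Set.Iio (2 * Real.pi))) (nhds 0) ∧
    (∀ c : ℝ, 0 < c → ∃! τ : ℝ, τ ∈ Set.Ioo 0 (2 * Real.pi) ∧
      (1 - Real.cos τ) / (τ - Real.sin τ) = c) := by
  refine ⟨strictAntiOn_geodesicRatio, tendsto_geodesicRatio_nhdsGT_zero,
    tendsto_geodesicRatio_nhdsLT_two_pi, fun c hc => ?_⟩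
  exact existsUnique_mem_Ioo_eq_of_tendsto (by positivity)
    (continuousOn_geodesicRatio.mono Ioo_subset_Ioi_self) strictAntiOn_geodesicRatio.injOn
    tendsto_geodesicRatio_nhdsGT_zero tendsto_geodesicRatio_nhdsLT_two_pi hc
end

section
/- For every s ∈ (0, 1), consider the function τ ↦ s·(s·τ·sin(s·τ) − 2(1 − cos(s·τ)))/(τ·sin(τ) − 2(1 − cos(τ))), extended by its limit s⁵ at τ = 0. Then there exists no constant C > 0 such that s·(s·τ·sin(s·τ) − 2(1−cos(s·τ)))/(τ·sin(τ) − 2(1−cos(τ))) ≥ C·s^Q holds with Q = 4 for all s ∈ (0,1) and all τ in a punctured neighborhood of 0. Equivalently, for each fixed C > 0 and Q = 4, there exist s ∈ (0,1) and arbitrarily small τ ≠ 0 with s·(s·τ·sin(s·τ) − 2(1−cos(s·τ)))/(τ·sin(τ) − 2(1−cos(τ))) < C·s⁴. -/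
open Real

lemma fact_id (x : ℝ) : x * Real.sin x - 2 * (1 - Real.cos x)
    = 2 * Real.sin (x/2) * (x * Real.cos (x/2) - 2 * Real.sin (x/2)) := by
  have h1 : Real.sin x = 2 * Real.sin (x/2) * Real.cos (x/2) := by
    rw [← Real.sin_two_mul]; ring_nf
  have h := Real.cos_two_mul (x/2)
  have h' := Real.sin_sq_add_cos_sq (x/2)
  have hx2 : (2:ℝ) * (x/2) = x := by ring
  rw [hx2] at h
  have h2 : Real.cos x = 1 - 2 * Real.sin (x/2) ^ 2 := by linarith
  rw [h1, h2]; ring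

lemma g_bound {x : ℝ} (hx : 0 < x) (hx1 : x ≤ 1) :
    |x * Real.cos (x/2) - 2 * Real.sin (x/2) + x^3/12| ≤ x^4/100 := by
  have hax : |x/2| ≤ 1 := by rw [abs_of_pos (by linarith)]; linarith
  have hc := Real.cos_bound hax
  have hs := Real.sin_bound hax
  rw [abs_of_pos (by linarith : (0:ℝ) < x/2)] at hc hs
  rw [abs_le] at hc hs ⊢
  have hc1 := mul_le_mul_of_nonneg_left hc.1 hx.le
  have hc2 := mul_le_mul_of_nonneg_left hc.2 hx.le
  have h5 : x^4 * (1 - x) ≥ 0 := mul_nonneg (by positivity) (by linarith)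
  constructor <;> nlinarith [hs.1, hs.2]

lemma tau_ineq {t : ℝ} (h0 : 0 < t) (h : t ≤ 1/2) :
    (t/2)*(t^3/12+t^4/100) < 2*((t/2-(t/2)^3/4)*(t^3/12-t^4/100)) := by
  nlinarith [pow_pos h0 4, pow_pos h0 3, pow_pos h0 5, pow_pos h0 6, pow_pos h0 7,
    mul_nonneg (pow_nonneg h0.le 4) (by linarith : (0:ℝ) ≤ 1/2 - t)]

lemma L3 {t : ℝ} (h0 : 0 < t) (h : t ≤ 1/2) : t^4/100 ≤ t^3/200 := by
  nlinarith [mul_nonneg (pow_nonneg h0.le 3) (by linarith : (0:ℝ) ≤ 1/2 - t)]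

lemma L1 {t : ℝ} (h0 : 0 < t) (h : t ≤ 1/2) : 0 < t/2 - (t/2)^3/4 := by
  have h2 : (t/2)^2 ≤ 1/16 := by nlinarith
  nlinarith [mul_nonneg h0.le (by linarith : (0:ℝ) ≤ 1/16 - (t/2)^2)]

lemma L2 {t : ℝ} (h0 : 0 < t) (h : t ≤ 1/2) : 0 < t^3/12 - t^4/100 := by
  nlinarith [pow_pos h0 3, mul_nonneg (pow_nonneg h0.le 3) (by linarith : (0:ℝ) ≤ 1/2 - t)]

lemma L4 {s : ℝ} (h0 : 0 < s) (h : s < 1) : s^4 ≤ s^3 := by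
  nlinarith [pow_pos h0 3]

/-- purely arithmetic core -/
lemma core (C s τ x a b gx gτ : ℝ)
    (hs0 : 0 < s) (hs1 : s < 1) (hsC : 2 * s ≤ C) (hC : 0 < C)
    (hτ0 : 0 < τ) (hτh : τ ≤ 1/2) (hx : x = s * τ)
    (hgx : |gx + x^3/12| ≤ x^4/100) (hgτ : |gτ + τ^3/12| ≤ τ^4/100)
    (ha0 : 0 < a) (hau : a < x/2)
    (hb0 : 0 < b) (hbl : τ/2 - (τ/2)^3/4 < b) :
    s * ((2*a*gx) / (2*b*gτ)) < C * s^4 := by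
  have hx0 : 0 < x := by rw [hx]; exact mul_pos hs0 hτ0
  have hxτ : x ≤ τ := by
    rw [hx]; exact mul_le_of_le_one_left hτ0.le hs1.le
  have hgx' := abs_le.mp hgx
  have hgτ' := abs_le.mp hgτ
  obtain ⟨P, hP⟩ : ∃ P : ℝ, P = -gx := ⟨_, rfl⟩
  obtain ⟨Qd, hQ⟩ : ∃ Q : ℝ, Q = -gτ := ⟨_, rfl⟩
  have hP0 : 0 < P := by
    have h1 : x^4/100 ≤ x^3/200 := L3 hx0 (by linarith)
    have := hgx'.2
    rw [hP]; linarith [pow_pos hx0 3]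
  have hQ0 : 0 < Qd := by
    have h1 : τ^4/100 ≤ τ^3/200 := L3 hτ0 hτh
    have := hgτ'.2
    rw [hQ]; linarith [pow_pos hτ0 3]
  have hPu : P ≤ s^3*(τ^3/12 + τ^4/100) := by
    have hs4 : s^4 ≤ s^3 := L4 hs0 hs1
    have h1 : P ≤ x^3/12 + x^4/100 := by rw [hP]; linarith [hgx'.1]
    have h2 : x^3/12 + x^4/100 = s^3*τ^3/12 + s^4*τ^4/100 := by rw [hx]; ring
    have key : 0 ≤ (s^3 - s^4) * τ^4 :=
      mul_nonneg (by linarith) (pow_nonneg hτ0.le 4)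
    linarith [key, h1, h2]
  have hQl : τ^3/12 - τ^4/100 ≤ Qd := by rw [hQ]; linarith [hgτ'.1]
  have hlb0 : 0 < τ/2 - (τ/2)^3/4 := L1 hτ0 hτh
  have hlQ0 : 0 < τ^3/12 - τ^4/100 := L2 hτ0 hτh
  have hnum : 2*a*gx = -(2*(a*P)) := by rw [hP]; ring
  have hden : 2*b*gτ = -(2*(b*Qd)) := by rw [hQ]; ring
  rw [hnum, hden, neg_div_neg_eq, mul_div_mul_left _ _ (two_ne_zero), mul_div_assoc']
  rw [div_lt_iff₀ (mul_pos hb0 hQ0)]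
  have step1 : a * P ≤ (x/2) * (s^3*(τ^3/12 + τ^4/100)) :=
    mul_le_mul hau.le hPu hP0.le (by linarith)
  have step2 : (τ/2-(τ/2)^3/4) * (τ^3/12-τ^4/100) ≤ b * Qd :=
    mul_le_mul hbl.le hQl hlQ0.le hb0.le
  have hti := tau_ineq hτ0 hτh
  calc s * (a * P) ≤ s * ((x/2) * (s^3*(τ^3/12 + τ^4/100))) :=
        mul_le_mul_of_nonneg_left step1 hs0.le
    _ = s^5 * ((τ/2)*(τ^3/12+τ^4/100)) := by rw [hx]; ring
    _ < s^5 * (2*((τ/2-(τ/2)^3/4)*(τ^3/12-τ^4/100))) :=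
        mul_lt_mul_of_pos_left hti (pow_pos hs0 5)
    _ = (2*s)*(s^4*((τ/2-(τ/2)^3/4)*(τ^3/12-τ^4/100))) := by ring
    _ ≤ C*(s^4*((τ/2-(τ/2)^3/4)*(τ^3/12-τ^4/100))) :=
        mul_le_mul_of_nonneg_right hsC
          (mul_nonneg (pow_nonneg hs0.le 4) (mul_nonneg hlb0.le hlQ0.le))
    _ ≤ C*(s^4*(b*Qd)) := by
        exact mul_le_mul_of_nonneg_left
          (mul_le_mul_of_nonneg_left step2 (pow_nonneg hs0.le 4)) hC.le
    _ = C*s^4*(b*Qd) := by ring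

theorem stmt15 (C : ℝ) (hC : 0 < C) :
    ∃ s ∈ Set.Ioo (0 : ℝ) 1, ∀ ε : ℝ, 0 < ε → ∃ τ : ℝ, τ ≠ 0 ∧ |τ| < ε ∧
      s * ((s * τ * Real.sin (s * τ) - 2 * (1 - Real.cos (s * τ))) /
          (τ * Real.sin τ - 2 * (1 - Real.cos τ))) < C * s ^ 4 := by
  obtain ⟨s, hsdef⟩ : ∃ s : ℝ, s = min C 1 / 2 := ⟨_, rfl⟩
  have hmC : min C 1 ≤ C := min_le_left _ _
  have hm1 : min C 1 ≤ 1 := min_le_right _ _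
  have hm0 : 0 < min C 1 := lt_min hC one_pos
  have hs0 : 0 < s := by rw [hsdef]; linarith
  have hs1 : s < 1 := by rw [hsdef]; linarith
  have hsC : 2 * s ≤ C := by rw [hsdef]; linarith
  refine ⟨s, ⟨hs0, hs1⟩, ?_⟩
  intro ε hε
  obtain ⟨τ, hτdef⟩ : ∃ τ : ℝ, τ = min ε 1 / 2 := ⟨_, rfl⟩
  have he1 : min ε 1 ≤ ε := min_le_left _ _
  have he2 : min ε 1 ≤ 1 := min_le_right _ _
  have he0 : 0 < min ε 1 := lt_min hε one_pos
  have hτ0 : 0 < τ := by rw [hτdef]; linarith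
  have hτh : τ ≤ 1/2 := by rw [hτdef]; linarith
  have hτε : τ < ε := by rw [hτdef]; linarith
  refine ⟨τ, ne_of_gt hτ0, by rw [abs_of_pos hτ0]; exact hτε, ?_⟩
  have hx0 : 0 < s * τ := mul_pos hs0 hτ0
  have hxτ : s * τ ≤ τ := mul_le_of_le_one_left hτ0.le hs1.le
  have hpi : (1:ℝ)/2 < Real.pi := by linarith [Real.pi_gt_three]
  rw [fact_id (s*τ), fact_id τ]
  exact core C s τ (s*τ) (Real.sin (s*τ/2)) (Real.sin (τ/2))
    (s*τ * Real.cos (s*τ/2) - 2 * Real.sin (s*τ/2))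
    (τ * Real.cos (τ/2) - 2 * Real.sin (τ/2))
    hs0 hs1 hsC hC hτ0 hτh rfl
    (g_bound hx0 (by linarith)) (g_bound hτ0 (by linarith))
    (Real.sin_pos_of_pos_of_lt_pi (by linarith) (by linarith))
    (Real.sin_lt (by linarith))
    (Real.sin_pos_of_pos_of_lt_pi (by linarith) (by linarith))
    (by have := Real.sin_gt_sub_cube (x := τ/2) (by linarith)
        nlinarith [pow_pos (by linarith : (0:ℝ) < τ/2) 3])
end
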